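/- arXiv:2603.25612 — 2 statements merged into one kernel-verified Lean document; each statement's English description precedes it below -/
import Mathlib

section
/- Let f(z) be holomorphic on the closed disk |z - s| ≤ R, non-vanishing at z = s and on the circle |z - s| = R. Then Re(f'(s)/f(s)) = ∑_{|ρ - s| < R} Re(1/(s - ρ) - (s - ρ)/R²) + (1/(πR)) ∫₀^{2π} cos(α)·log|f(s + Re^{iα})| dα, where the sum is over zeros ρ of f in the open disk, counted with multiplicity. -/
/-!
For a zero-free `g`, integration by parts gives
`∫ cos α · log ‖g (γ α)‖ dα = -∫ sin α · Re (γ' α · (g'/g) (γ α)) dα` on the circle `γ`, and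
`sin α · γ' α = (γ α - s)² / (2R) - R / 2`; by the mean value property, applied to `g'/g` and to
`(z - s)² g'/g`, the right-hand side is `π R Re ((g'/g) s)`.
A zero `ρ` in the disk is divided out, `f = (z - ρ) f₁`, and the linear factor is handled by the
zero-free case applied to `R² - conj (ρ - s) (z - s)`, whose modulus on the circle is `R ‖z - ρ‖`.
Induction over the multiset of zeros concludes.
-/

open Complex Metric Real
open scoped ComplexConjugate

section Factorization

variable {𝕜 : Type*} [NontriviallyNormedField 𝕜]

theorem AnalyticAt.dslope {E : Type*} [NormedAddCommGroup E] [NormedSpace 𝕜 E] {f : 𝕜 → E}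
    {a z : 𝕜} (ha : AnalyticAt 𝕜 f a) (hz : AnalyticAt 𝕜 f z) :
    AnalyticAt 𝕜 (dslope f a) z := by
  rcases eq_or_ne z a with rfl | hza
  · obtain ⟨p, hp⟩ := ha
    exact hp.has_fpower_series_dslope_fslope.analyticAt
  · have hslope : AnalyticAt 𝕜 (fun x => (x - a)⁻¹ • (f x - f a)) z :=
      ((analyticAt_id.sub analyticAt_const).inv (sub_ne_zero.2 hza)).smul
        (hz.sub analyticAt_const)
    exact hslope.congr (dslope_eventuallyEq_slope_of_ne f hza).symm

theorem AnalyticOnNhd.exists_eq_sub_mul {f : 𝕜 → 𝕜} {U : Set 𝕜} {a : 𝕜}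
    (hf : AnalyticOnNhd 𝕜 f U) (ha : a ∈ U) (h : f a = 0) :
    ∃ g, AnalyticOnNhd 𝕜 g U ∧ f = fun z => (z - a) * g z :=
  ⟨dslope f a, fun z hz => (hf a ha).dslope (hf z hz),
    funext fun z => by simpa [h] using (sub_smul_dslope f a z).symm⟩

theorem natCast_count_eq_analyticOrderAt_of_cons [DecidableEq 𝕜] {g : 𝕜 → 𝕜} {a z : 𝕜}
    {Z : Multiset 𝕜} (hg : AnalyticAt 𝕜 g z)
    (h : ((a ::ₘ Z).count z : ℕ∞) = analyticOrderAt (fun w => (w - a) * g w) z) :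
    (Z.count z : ℕ∞) = analyticOrderAt g z := by
  change _ = analyticOrderAt ((· - a) * g) z at h
  rw [analyticOrderAt_mul (by fun_prop) hg, Multiset.count_cons] at h
  split_ifs at h with hza
  · subst hza
    rw [analyticOrderAt_id_sub_const_self, Nat.cast_add, Nat.cast_one] at h
    exact (WithTop.add_right_inj ENat.one_ne_top).1 (h.trans (add_comm _ _))
  · simpa [analyticOrderAt_id_sub_const_of_ne hza] using h

end Factorization

theorem HasDerivAt.log_norm {w : ℝ → ℂ} {w' : ℂ} {t : ℝ} (hw : HasDerivAt w w' t)
    (h0 : w t ≠ 0) : HasDerivAt (fun t => Real.log ‖w t‖) (w' / w t).re t := by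
  have hsq : ‖w t‖ ^ 2 ≠ 0 := by positivity
  refine (((hw.norm_sq.log hsq).div_const 2).congr_deriv ?_).congr_of_eventuallyEq
    (Filter.Eventually.of_forall fun x => ?_)
  · rw [Complex.inner, Complex.div_re, Complex.mul_re, Complex.conj_re, Complex.conj_im,
      ← Complex.normSq_eq_norm_sq, Complex.normSq_apply]
    field_simp
    ring
  · simp only [Real.log_pow]
    ring

section Circle

variable {c : ℂ} {R : ℝ}

theorem DiffContOnCl.integral_comp_circleMap {E : Type*} [NormedAddCommGroup E]
    [NormedSpace ℂ E] [CompleteSpace E] {F : ℂ → E} (hF : DiffContOnCl ℂ F (ball c |R|)) :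
    ∫ θ in (0:ℝ)..2 * π, F (circleMap c R θ) = (2 * π) • F c := by
  rw [← hF.circleAverage, Real.circleAverage_def, smul_inv_smul₀ (by positivity)]

theorem ofReal_sin_mul_circleMap_zero_mul_I (θ : ℝ) :
    (Real.sin θ : ℂ) * (circleMap 0 R θ * I) = circleMap 0 R θ ^ 2 / (2 * R) - R / 2 := by
  simp only [circleMap, zero_add, Complex.exp_mul_I, ofReal_sin]
  field_simp
  linear_combination -(R : ℂ) * Complex.sin_sq_add_cos_sq θ
    + Complex.sin θ ^ 2 * R * I_sq

theorem integral_sin_mul_circleMap_zero_mul_I_mul (hR : 0 < R) {G : ℂ → ℂ}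
    (hG : AnalyticOnNhd ℂ G (closedBall c R)) :
    ∫ θ in (0:ℝ)..2 * π, (Real.sin θ : ℂ) * (circleMap 0 R θ * I) * G (circleMap c R θ)
      = -(π * R * G c) := by
  have hmean : ∀ F : ℂ → ℂ, AnalyticOnNhd ℂ F (closedBall c R) →
      ∫ θ in (0:ℝ)..2 * π, F (circleMap c R θ) = 2 * π * F c := fun F hF => by
    simpa using (hF.differentiableOn.diffContOnCl_ball (by rw [abs_of_pos hR])
      ).integral_comp_circleMap
  have hcont : ∀ F : ℂ → ℂ, AnalyticOnNhd ℂ F (closedBall c R) →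
      IntervalIntegrable (fun θ => F (circleMap c R θ)) MeasureTheory.volume 0 (2 * π) :=
    fun F hF => (hF.continuousOn.comp_continuous (continuous_circleMap c R)
      (circleMap_mem_closedBall c hR.le)).intervalIntegrable _ _
  have hG₂ : AnalyticOnNhd ℂ (fun z => (z - c) ^ 2 * G z) (closedBall c R) :=
    fun z hz => by have := hG z hz; fun_prop
  have hpt : ∀ θ, (Real.sin θ : ℂ) * (circleMap 0 R θ * I) * G (circleMap c R θ)
      = (1 / (2 * R)) * ((circleMap c R θ - c) ^ 2 * G (circleMap c R θ))
        - R / 2 * G (circleMap c R θ) := fun θ => by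
    rw [ofReal_sin_mul_circleMap_zero_mul_I, circleMap_sub_center]
    ring
  simp_rw [hpt]
  rw [intervalIntegral.integral_sub ((hcont _ hG₂).const_mul _) ((hcont _ hG).const_mul _),
    intervalIntegral.integral_const_mul, intervalIntegral.integral_const_mul, hmean _ hG₂,
    hmean _ hG]
  simp only [sub_self, ne_eq, OfNat.ofNat_ne_zero, not_false_eq_true, zero_pow, zero_mul,
    mul_zero]
  ring

theorem re_logDeriv_eq_integral_cos_mul_log_norm (hR : 0 < R) {g : ℂ → ℂ}
    (hg : AnalyticOnNhd ℂ g (closedBall c R)) (hg0 : ∀ z ∈ closedBall c R, g z ≠ 0) :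
    (logDeriv g c).re
      = (1 / (π * R)) * ∫ α in (0:ℝ)..2 * π, Real.cos α * Real.log ‖g (circleMap c R α)‖ := by
  have hG : AnalyticOnNhd ℂ (logDeriv g) (closedBall c R) :=
    fun z hz => (hg z hz).deriv.div (hg z hz) (hg0 z hz)
  have hderiv : ∀ θ, HasDerivAt (fun θ => Real.log ‖g (circleMap c R θ)‖)
      (circleMap 0 R θ * I * logDeriv g (circleMap c R θ)).re θ := fun θ => by
    have hγ := circleMap_mem_closedBall c hR.le θ
    refine (((hg _ hγ).differentiableAt.hasDerivAt.comp θ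
      (hasDerivAt_circleMap c R θ)).log_norm (hg0 _ hγ)).congr_deriv ?_
    rw [logDeriv_apply, Function.comp_apply]
    ring_nf
  have hGc : Continuous fun θ => logDeriv g (circleMap c R θ) :=
    hG.continuousOn.comp_continuous (continuous_circleMap c R) (circleMap_mem_closedBall c hR.le)
  have hparts := intervalIntegral.integral_mul_deriv_eq_deriv_mul (a := 0) (b := 2 * π)
    (fun θ _ => hderiv θ) (fun θ _ => Real.hasDerivAt_sin θ)
    ((continuous_re.comp (by fun_prop : Continuous fun θ =>
      circleMap 0 R θ * I * logDeriv g (circleMap c R θ))).intervalIntegrable _ _)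
    (Real.continuous_cos.intervalIntegrable _ _)
  simp only [Real.sin_zero, Real.sin_two_pi, mul_zero, sub_zero, zero_sub] at hparts
  have hsin : ∫ θ in (0:ℝ)..2 * π,
      (circleMap 0 R θ * I * logDeriv g (circleMap c R θ)).re * Real.sin θ
        = -(π * R * (logDeriv g c).re) := by
    have hre := intervalIntegral.intervalIntegral_re (𝕜 := ℂ) (μ := MeasureTheory.volume)
      (a := 0) (b := 2 * π) ((by fun_prop : Continuous fun θ =>
        (Real.sin θ : ℂ) * (circleMap 0 R θ * I) * logDeriv g (circleMap c R θ)
        ).intervalIntegrable _ _)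
    have h := congrArg re (integral_sin_mul_circleMap_zero_mul_I_mul hR hG)
    simp only [RCLike.re_to_complex] at hre
    rw [← hre] at h
    simpa only [mul_assoc, re_ofReal_mul, neg_re, mul_comm (Real.sin _)] using h
  rw [intervalIntegral.integral_congr (g := fun α => Real.log ‖g (circleMap c R α)‖ * Real.cos α)
    (fun _ _ => mul_comm _ _), hparts, hsin]
  field_simp

theorem integral_cos_mul_log_norm_mul (hR : 0 ≤ R) {f g : ℂ → ℂ}
    (hf : ContinuousOn f (sphere c R)) (hg : ContinuousOn g (sphere c R))
    (hf0 : ∀ z ∈ sphere c R, f z ≠ 0) (hg0 : ∀ z ∈ sphere c R, g z ≠ 0) :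
    ∫ α in (0:ℝ)..2 * π, Real.cos α * Real.log ‖f (circleMap c R α) * g (circleMap c R α)‖
      = (∫ α in (0:ℝ)..2 * π, Real.cos α * Real.log ‖f (circleMap c R α)‖)
        + ∫ α in (0:ℝ)..2 * π, Real.cos α * Real.log ‖g (circleMap c R α)‖ := by
  have hint : ∀ F : ℂ → ℂ, ContinuousOn F (sphere c R) → (∀ z ∈ sphere c R, F z ≠ 0) →
      IntervalIntegrable (fun α => Real.cos α * Real.log ‖F (circleMap c R α)‖)
        MeasureTheory.volume 0 (2 * π) := fun F hF hF0 =>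
    (Real.continuous_cos.mul ((hF.comp_continuous (continuous_circleMap c R)
      (circleMap_mem_sphere c hR)).norm.log fun α =>
        norm_ne_zero_iff.2 (hF0 _ (circleMap_mem_sphere c hR α)))).intervalIntegrable _ _
  rw [← intervalIntegral.integral_add (hint f hf hf0) (hint g hg hg0)]
  refine intervalIntegral.integral_congr fun α _ => ?_
  rw [norm_mul, Real.log_mul (norm_ne_zero_iff.2 (hf0 _ (circleMap_mem_sphere c hR α)))
    (norm_ne_zero_iff.2 (hg0 _ (circleMap_mem_sphere c hR α))), mul_add]

theorem norm_sq_sub_conj_mul_eq_mul_norm_sub {e w : ℂ} (he : ‖e‖ = R) :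
    ‖(R : ℂ) ^ 2 - conj w * e‖ = R * ‖e - w‖ := by
  have hR : (R : ℂ) ^ 2 = e * conj e := by
    rw [Complex.mul_conj, Complex.normSq_eq_norm_sq, he, ofReal_pow]
  calc ‖(R : ℂ) ^ 2 - conj w * e‖ = ‖e * conj (e - w)‖ := by rw [hR, map_sub]; ring_nf
    _ = R * ‖e - w‖ := by rw [norm_mul, Complex.norm_conj, he]

theorem integral_cos_mul_log_norm_circleMap_sub (hR : 0 < R) {ρ : ℂ} (hρ : ρ ∈ ball c R) :
    (1 / (π * R)) * ∫ α in (0:ℝ)..2 * π, Real.cos α * Real.log ‖circleMap c R α - ρ‖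
      = ((c - ρ) / (R : ℂ) ^ 2).re := by
  set h : ℂ → ℂ := fun z => (R : ℂ) ^ 2 - conj (ρ - c) * (z - c)
  have hh : AnalyticOnNhd ℂ h (closedBall c R) := fun z _ => by fun_prop
  have hh0 : ∀ z ∈ closedBall c R, h z ≠ 0 := fun z hz hz0 => by
    have hnorm : ‖(R : ℂ) ^ 2‖ = ‖conj (ρ - c) * (z - c)‖ := by rw [sub_eq_zero.1 hz0]
    rw [norm_mul, Complex.norm_conj, norm_pow, Complex.norm_real, Real.norm_of_nonneg hR.le]
      at hnorm
    nlinarith [mem_ball_iff_norm.1 hρ, mem_closedBall_iff_norm.1 hz, norm_nonneg (ρ - c)]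
  have hlogDeriv : logDeriv h c = -conj (ρ - c) / (R : ℂ) ^ 2 := by
    have hd : HasDerivAt h (-conj (ρ - c)) c :=
      ((((hasDerivAt_id c).sub_const c).const_mul (conj (ρ - c))).const_sub
        ((R : ℂ) ^ 2)).congr_deriv (by simp)
    rw [logDeriv_apply, hd.deriv]
    simp [h]
  have hnorm : ∀ α, ‖h (circleMap c R α)‖ = ‖(R : ℂ) * (circleMap c R α - ρ)‖ := fun α => by
    rw [norm_mul, Complex.norm_real, Real.norm_of_nonneg hR.le, ← sub_sub_sub_cancel_right _ ρ c,
      ← norm_sq_sub_conj_mul_eq_mul_norm_sub (by simp [abs_of_pos hR])]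
  have hsplit := integral_cos_mul_log_norm_mul hR.le (c := c) (f := fun _ => (R : ℂ))
    (g := (· - ρ)) continuousOn_const (by fun_prop) (by simp [hR.ne'])
    (fun z hz => sub_ne_zero.2 (sphere_disjoint_ball.ne_of_mem hz hρ))
  have hconst : ∫ α in (0:ℝ)..2 * π, Real.cos α * Real.log ‖(R : ℂ)‖ = 0 := by
    simp [intervalIntegral.integral_mul_const]
  have hA := re_logDeriv_eq_integral_cos_mul_log_norm hR hh hh0
  simp only [hnorm, hsplit, hconst, hlogDeriv, zero_add] at hA
  rw [← hA, ← map_neg, neg_sub, ← ofReal_pow, div_ofReal_re, div_ofReal_re, conj_re]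

end Circle

open Complex Real in
/-- Heath-Brown's Jensen-type formula. `Z` is the multiset of zeros of `f` in the
open disk `|z - s| < R`, counted with multiplicity (i.e. the multiplicity of each
`z` in `Z` equals the order of vanishing of `f` at `z`). -/
theorem heath_brown_jensen (f : ℂ → ℂ) (s : ℂ) (R : ℝ) (hR : 0 < R)
    (hf : ∀ z ∈ Metric.closedBall s R, AnalyticAt ℂ f z)
    (hs : f s ≠ 0)
    (hsphere : ∀ z ∈ Metric.sphere s R, f z ≠ 0)
    (Z : Multiset ℂ)
    (hZ : ∀ z (hz : z ∈ Metric.ball s R),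
      (Z.count z : ℕ∞) = analyticOrderAt f z)
    (hZ' : ∀ z ∈ Z, z ∈ Metric.ball s R) :
    (deriv f s / f s).re
      = (Z.map (fun ρ => (1 / (s - ρ) - (s - ρ) / (R : ℂ) ^ 2).re)).sum
        + (1 / (π * R)) * ∫ α in (0:ℝ)..(2 * π),
            Real.cos α * Real.log (‖f (s + R * Complex.exp (α * I))‖) := by
  change (logDeriv f s).re = _ + (1 / (π * R)) * ∫ α in (0:ℝ)..2 * π,
    Real.cos α * Real.log ‖f (circleMap s R α)‖
  induction Z using Multiset.induction_on generalizing f with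
  | empty =>
    have hf0 : ∀ z ∈ closedBall s R, f z ≠ 0 := fun z hz => by
      rcases (mem_closedBall.1 hz).lt_or_eq with hz | hz
      · exact (analyticOrderAt_eq_zero.1 (by simpa using (hZ z hz).symm)).resolve_left
          (not_not.2 (hf z (ball_subset_closedBall hz)))
      · exact hsphere z hz
    simpa using re_logDeriv_eq_integral_cos_mul_log_norm hR hf hf0
  | cons ρ Z ih =>
    have hρ : ρ ∈ ball s R := hZ' ρ (Multiset.mem_cons_self ρ Z)
    obtain ⟨g, hg, rfl⟩ := AnalyticOnNhd.exists_eq_sub_mul hf (ball_subset_closedBall hρ)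
      (apply_eq_zero_of_analyticOrderAt_ne_zero (by simp [← hZ ρ hρ]))
    have hgsphere : ∀ z ∈ sphere s R, g z ≠ 0 := fun z hz => right_ne_zero_of_mul (hsphere z hz)
    rw [logDeriv_mul s (left_ne_zero_of_mul hs) (right_ne_zero_of_mul hs) (by fun_prop)
        (hg s (mem_closedBall_self hR.le)).differentiableAt,
      integral_cos_mul_log_norm_mul hR.le (f := (· - ρ)) (by fun_prop)
        (hg.continuousOn.mono sphere_subset_closedBall)
        (fun z hz => left_ne_zero_of_mul (hsphere z hz)) hgsphere,
      mul_add, integral_cos_mul_log_norm_circleMap_sub hR hρ, add_re,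
      ih g hg (right_ne_zero_of_mul hs) hgsphere
        (fun z hz => natCast_count_eq_analyticOrderAt_of_cons (hg z (ball_subset_closedBall hz))
          (hZ z hz))
        (fun z hz => hZ' z (Multiset.mem_cons_of_mem hz))]
    simp [logDeriv_apply]
    ring
end

section
/- For any real N ≥ 2 and any positive integer m, ∑_{N < n ≤ 2N} τ(n)²·τ_m(n) ≪_m N·(log N)^{4m-1}, where τ is the divisor function and τ_m the m-fold divisor function. -/
/-- The `m`-fold divisor function: the number of ways to write `n` as an ordered
product of `m` positive integers. -/
def tauM (m n : ℕ) : ℕ :=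
  ((Fintype.piFinset fun _ : Fin m => Finset.Icc 1 n).filter
    (fun d => ∏ i, d i = n)).card

/-!
With `τ_k = ζ ^ k`, the function `τ_k` is submultiplicative, because every divisor of `a * b` is
a product of a divisor of `a` and a divisor of `b`. Hence
`τ(n) τ_k(n) = ∑_{de = n} τ_k(de) ≤ ∑_{de = n} τ_k(d) τ_k(e) = τ_{2k}(n)`,
and applied twice this gives `τ(n)² τ_m(n) ≤ τ_{4m}(n)`. Since
`∑_{n ≤ N} τ_{k+2}(n) = ∑_{d ≤ N} ∑_{e ≤ N/d} τ_{k+1}(e)`, induction on `k` bounds the partial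
sums of `τ_{k+1}` by `N H_N ^ k`, and `H_N ≤ 1 + log N`.
-/

open Finset ArithmeticFunction
open scoped ArithmeticFunction.zeta

theorem Nat.card_finMulAntidiag_succ (k n : ℕ) :
    #(finMulAntidiag (k + 1) n) = ∑ p ∈ n.divisorsAntidiagonal, #(finMulAntidiag k p.2) := by
  rw [← Finset.card_sigma]
  refine card_nbij' (fun f => ⟨(f 0, ∏ i, Fin.tail f i), Fin.tail f⟩)
    (fun x => Fin.cons x.1.1 x.2) ?_ ?_ ?_ ?_
  · intro f hf
    simp only [coe_sigma, Set.mem_sigma_iff, mem_coe, mem_divisorsAntidiagonal, mem_finMulAntidiag,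
      Fin.prod_univ_succ, Fin.tail] at hf ⊢
    exact ⟨hf, trivial, right_ne_zero_of_mul (hf.1 ▸ hf.2)⟩
  · rintro ⟨⟨a, b⟩, g⟩ hg
    simp only [coe_sigma, Set.mem_sigma_iff, mem_coe, mem_divisorsAntidiagonal, mem_finMulAntidiag,
      Fin.prod_univ_succ, Fin.cons_zero, Fin.cons_succ] at hg ⊢
    rw [hg.2.1]
    exact hg.1
  · intro f _
    exact Fin.cons_self_tail f
  · rintro ⟨⟨a, b⟩, g⟩ hg
    simp only [coe_sigma, Set.mem_sigma_iff, mem_coe, mem_finMulAntidiag] at hg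
    simp [Fin.tail, hg.2.1]

theorem Nat.card_finMulAntidiag_eq_zeta_pow (k n : ℕ) : #(finMulAntidiag k n) = (ζ ^ k) n := by
  induction k generalizing n with
  | zero =>
    rcases eq_or_ne n 1 with rfl | hn
    · simp [finMulAntidiag_one]
    · simp [finMulAntidiag_zero_left hn, hn]
  | succ k ih =>
    rw [card_finMulAntidiag_succ, _root_.pow_succ', mul_apply]
    refine sum_congr rfl fun p hp => ?_
    rw [ih, zeta_apply_ne (left_ne_zero_of_mem_divisorsAntidiagonal hp), one_mul]

theorem tauM_eq_card_finMulAntidiag (k n : ℕ) : tauM k n = #(Nat.finMulAntidiag k n) := by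
  unfold tauM
  congr 1
  ext f
  simp only [mem_filter, Fintype.mem_piFinset, mem_Icc, Nat.mem_finMulAntidiag]
  constructor
  · rintro ⟨hf, rfl⟩
    exact ⟨rfl, prod_ne_zero_iff.mpr fun i _ => Nat.one_le_iff_ne_zero.mp (hf i).1⟩
  · rintro ⟨rfl, hn⟩
    refine ⟨fun i => ⟨Nat.pos_of_ne_zero (prod_ne_zero_iff.mp hn i (mem_univ i)), ?_⟩, rfl⟩
    exact Nat.le_of_dvd (Nat.pos_of_ne_zero hn) (dvd_prod_of_mem f (mem_univ i))

theorem tauM_eq_zeta_pow (k n : ℕ) : tauM k n = (ζ ^ k) n :=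
  (tauM_eq_card_finMulAntidiag k n).trans (Nat.card_finMulAntidiag_eq_zeta_pow k n)

theorem zeta_mul_apply_mul_le {f : ArithmeticFunction ℕ} (hf : ∀ a b, f (a * b) ≤ f a * f b)
    (a b : ℕ) : (ζ * f) (a * b) ≤ (ζ * f) a * (ζ * f) b := by
  simp only [zeta_mul_apply, Nat.divisors_mul, mul_def, sum_mul_sum]
  calc ∑ d ∈ (a.divisors ×ˢ b.divisors).image (fun p => p.1 * p.2), f d
      ≤ ∑ p ∈ a.divisors ×ˢ b.divisors, f (p.1 * p.2) :=
        sum_image_le_of_nonneg fun _ _ => Nat.zero_le _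
    _ ≤ ∑ d ∈ a.divisors, ∑ e ∈ b.divisors, f d * f e := by
        rw [sum_product]
        gcongr
        exact hf _ _

theorem zeta_pow_apply_mul_le (k a b : ℕ) : (ζ ^ k) (a * b) ≤ (ζ ^ k) a * (ζ ^ k) b := by
  induction k generalizing a b with
  | zero =>
    simp only [pow_zero, one_apply, mul_eq_one]
    split_ifs <;> simp_all
  | succ k ih =>
    rw [pow_succ']
    exact zeta_mul_apply_mul_le ih a b

theorem card_divisors_mul_zeta_pow_le (k n : ℕ) : #n.divisors * (ζ ^ k) n ≤ (ζ ^ (2 * k)) n := by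
  rw [two_mul, pow_add, mul_apply, Nat.sum_divisorsAntidiagonal fun d e => (ζ ^ k) d * (ζ ^ k) e,
    card_eq_sum_ones, sum_mul]
  refine sum_le_sum fun d hd => ?_
  rw [one_mul]
  calc (ζ ^ k) n = (ζ ^ k) (d * (n / d)) := by
        rw [Nat.mul_div_cancel' (Nat.dvd_of_mem_divisors hd)]
    _ ≤ _ := zeta_pow_apply_mul_le k d (n / d)

theorem card_divisors_sq_mul_zeta_pow_le (m n : ℕ) :
    #n.divisors ^ 2 * (ζ ^ m) n ≤ (ζ ^ (4 * m)) n :=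
  calc #n.divisors ^ 2 * (ζ ^ m) n
      = #n.divisors * (#n.divisors * (ζ ^ m) n) := by ring
    _ ≤ #n.divisors * (ζ ^ (2 * m)) n := by
        gcongr
        exact card_divisors_mul_zeta_pow_le m n
    _ ≤ (ζ ^ (2 * (2 * m))) n := card_divisors_mul_zeta_pow_le (2 * m) n
    _ = (ζ ^ (4 * m)) n := by ring_nf

theorem harmonic_mono : Monotone harmonic :=
  monotone_nat_of_le_succ fun n => by
    rw [harmonic_succ]
    exact le_add_of_nonneg_right (by positivity)

theorem harmonic_nonneg (n : ℕ) : 0 ≤ harmonic n :=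
  harmonic_zero ▸ harmonic_mono n.zero_le

theorem harmonic_eq_sum_Ioc (N : ℕ) : (harmonic N : ℝ) = ∑ n ∈ Ioc 0 N, (n : ℝ)⁻¹ := by
  rw [harmonic_eq_sum_Icc, ← Icc_add_one_left_eq_Ioc]
  push_cast
  rfl

theorem sum_Ioc_zeta_pow_succ_le (k N : ℕ) :
    ∑ n ∈ Ioc 0 N, ((ζ ^ (k + 1)) n : ℝ) ≤ N * harmonic N ^ k := by
  induction k generalizing N with
  | zero => rw [zero_add, pow_one, pow_zero, mul_one, ← Nat.cast_sum, sum_Ioc_zeta]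
  | succ k ih =>
    calc ∑ n ∈ Ioc 0 N, ((ζ ^ (k + 2)) n : ℝ)
        = ∑ n ∈ Ioc 0 N, ∑ e ∈ Ioc 0 (N / n), ((ζ ^ (k + 1)) e : ℝ) := by
          rw [pow_succ', ← Nat.cast_sum, sum_Ioc_mul_eq_sum_sum, Nat.cast_sum]
          refine sum_congr rfl fun n hn => ?_
          rw [zeta_apply_ne (mem_Ioc.mp hn).1.ne', one_mul, Nat.cast_sum]
      _ ≤ ∑ n ∈ Ioc 0 N, (N / n * harmonic N ^ k : ℝ) := by
          refine sum_le_sum fun n _ => (ih (N / n)).trans ?_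
          have := harmonic_nonneg (N / n)
          gcongr
          · exact Nat.cast_div_le
          · exact harmonic_mono (Nat.div_le_self N n)
      _ = N * harmonic N ^ (k + 1) := by
          rw [pow_succ, harmonic_eq_sum_Ioc, mul_sum, mul_sum]
          refine sum_congr rfl fun n _ => ?_
          ring

theorem divisor_mean_value (m : ℕ) (hm : 0 < m) :
    ∃ C : ℝ, 0 < C ∧ ∀ N : ℝ, 2 ≤ N →
      ∑ n ∈ Finset.Ioc ⌊N⌋₊ ⌊2 * N⌋₊,
          ((n.divisors.card : ℝ) ^ 2 * (tauM m n : ℝ))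
        ≤ C * N * Real.log N ^ (4 * m - 1) := by
  refine ⟨2 * 4 ^ (4 * m - 1), by positivity, fun N hN => ?_⟩
  have hlog : 1 + Real.log (2 * N) ≤ 4 * Real.log N := by
    have := Real.log_le_log (by norm_num) hN
    rw [Real.log_mul two_ne_zero (by positivity)]
    linarith [Real.log_two_gt_d9]
  have hpointwise (n : ℕ) : (n.divisors.card : ℝ) ^ 2 * (tauM m n : ℝ)
      ≤ ((ζ ^ (4 * m - 1 + 1)) n : ℝ) := by
    rw [Nat.sub_add_cancel (by omega), tauM_eq_zeta_pow]
    exact_mod_cast card_divisors_sq_mul_zeta_pow_le m n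
  calc ∑ n ∈ Ioc ⌊N⌋₊ ⌊2 * N⌋₊, (n.divisors.card : ℝ) ^ 2 * (tauM m n : ℝ)
      ≤ ∑ n ∈ Ioc 0 ⌊2 * N⌋₊, ((ζ ^ (4 * m - 1 + 1)) n : ℝ) :=
        (sum_le_sum fun n _ => hpointwise n).trans <|
          sum_le_sum_of_subset_of_nonneg (Ioc_subset_Ioc_left (Nat.zero_le _))
            fun _ _ _ => Nat.cast_nonneg _
    _ ≤ ⌊2 * N⌋₊ * harmonic ⌊2 * N⌋₊ ^ (4 * m - 1) := sum_Ioc_zeta_pow_succ_le _ _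
    _ ≤ 2 * N * (1 + Real.log (2 * N)) ^ (4 * m - 1) := by
        have := harmonic_nonneg ⌊2 * N⌋₊
        gcongr
        · exact Nat.floor_le (by positivity)
        · exact harmonic_floor_le_one_add_log _ (by linarith)
    _ ≤ 2 * N * (4 * Real.log N) ^ (4 * m - 1) := by
        have := Real.log_nonneg (by linarith : (1 : ℝ) ≤ 2 * N)
        gcongr
    _ = 2 * 4 ^ (4 * m - 1) * N * Real.log N ^ (4 * m - 1) := by ring
end
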